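/- Let I be a g-φ-1-absorbing prime ideal of R and let (a, b, c) be a g-φ-1-triple zero of I. If ac ∉ I and bc ∉ I, then I_g³ ⊆ φ(I). -/
import Mathlib


/-- The underlying set of an element of `GI(R) ∪ {∅}`: `none` plays the role of `∅`. -/
def phiSet {ι R : Type*} [AddGroup ι] [DecidableEq ι] [CommRing R]
    (𝒜 : ι → AddSubgroup R) [GradedRing 𝒜]
    (o : Option (HomogeneousIdeal 𝒜)) : Set R :=
  {x | ∃ J ∈ o, x ∈ J}

/-- `I_g = I ∩ R_g`, the `g`-th graded piece of the graded ideal `I`. -/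
def piece {ι R : Type*} [AddGroup ι] [DecidableEq ι] [CommRing R]
    (𝒜 : ι → AddSubgroup R) [GradedRing 𝒜]
    (I : HomogeneousIdeal 𝒜) (g : ι) : Set R :=
  (I.toIdeal : Set R) ∩ (𝒜 g)

/-- `I` is a `g`-`φ`-1-absorbing prime ideal of `R`: `I_g ≠ R_g` and whenever
`a, b, c ∈ R_g` are nonunits with `a*b*c ∈ I - φ(I)`, then `ab ∈ I` or `c ∈ I`. -/
def IsGPhiOneAbsPrime {ι R : Type*} [AddGroup ι] [DecidableEq ι] [CommRing R]
    (𝒜 : ι → AddSubgroup R) [GradedRing 𝒜] (g : ι)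
    (φ : HomogeneousIdeal 𝒜 → Option (HomogeneousIdeal 𝒜)) (I : HomogeneousIdeal 𝒜) : Prop :=
  piece 𝒜 I g ≠ (𝒜 g : Set R) ∧
    ∀ a b c : R, a ∈ 𝒜 g → b ∈ 𝒜 g → c ∈ 𝒜 g → ¬IsUnit a → ¬IsUnit b → ¬IsUnit c →
      a * b * c ∈ I.toIdeal → a * b * c ∉ phiSet 𝒜 (φ I) →
      a * b ∈ I.toIdeal ∨ c ∈ I.toIdeal

/-- `(a, b, c)` is a `g`-`φ`-1-triple zero of `I`: `a, b, c ∈ R_g` are nonunits with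
`abc ∈ φ(I)`, `ab ∉ I` and `c ∉ I`. -/
def IsGPhiTripleZero {ι R : Type*} [AddGroup ι] [DecidableEq ι] [CommRing R]
    (𝒜 : ι → AddSubgroup R) [GradedRing 𝒜] (g : ι)
    (φ : HomogeneousIdeal 𝒜 → Option (HomogeneousIdeal 𝒜)) (I : HomogeneousIdeal 𝒜)
    (a b c : R) : Prop :=
  a ∈ 𝒜 g ∧ b ∈ 𝒜 g ∧ c ∈ 𝒜 g ∧ ¬IsUnit a ∧ ¬IsUnit b ∧ ¬IsUnit c ∧
    a * b * c ∈ phiSet 𝒜 (φ I) ∧ a * b ∉ I.toIdeal ∧ c ∉ I.toIdeal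

/-- `S³`: the set of (finite) sums of products `x*y*z` with `x, y, z ∈ S`. -/
def cubeSet {R : Type*} [CommRing R] (S : Set R) : Set R :=
  (AddSubmonoid.closure {w : R | ∃ x ∈ S, ∃ y ∈ S, ∃ z ∈ S, w = x * y * z} : Set R)

/-- If `I` is a `g`-`φ`-1-absorbing prime ideal of `R`, `(a, b, c)` is a
`g`-`φ`-1-triple zero of `I`, and `ac ∉ I`, `bc ∉ I`, then `I_g³ ⊆ φ(I)`. -/
theorem stmt9 {ι R : Type*} [AddGroup ι] [DecidableEq ι] [CommRing R] [Nontrivial R]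
    (𝒜 : ι → AddSubgroup R) [GradedRing 𝒜] (g : ι)
    (φ : HomogeneousIdeal 𝒜 → Option (HomogeneousIdeal 𝒜))
    (hφ : ∀ J : HomogeneousIdeal 𝒜, phiSet 𝒜 (φ J) ⊆ (J.toIdeal : Set R))
    (I : HomogeneousIdeal 𝒜) (hI : IsGPhiOneAbsPrime 𝒜 g φ I)
    (a b c : R) (habc : IsGPhiTripleZero 𝒜 g φ I a b c)
    (hac : a * c ∉ I.toIdeal) (hbc : b * c ∉ I.toIdeal) :
    cubeSet (piece 𝒜 I g) ⊆ phiSet 𝒜 (φ I) := by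
  obtain ⟨hag, hbg, hcg, hua, hub, huc, habcφ, habI, hcI⟩ := habc
  obtain ⟨J, hJmem, habcJ⟩ := habcφ
  have hJeq : φ I = some J := Option.mem_def.mp hJmem
  have hφset : phiSet 𝒜 (φ I) = (J.toIdeal : Set R) := by
    ext x; simp [phiSet, hJeq, HomogeneousIdeal.mem_iff]
  have habcJ' : a * b * c ∈ J.toIdeal := habcJ
  have hJle : ∀ {x : R}, x ∈ J.toIdeal → x ∈ I.toIdeal := by
    intro x hx
    exact hφ I (by rw [hφset]; exact hx)
  have key : ∀ u v w : R, u ∈ 𝒜 g → v ∈ 𝒜 g → w ∈ 𝒜 g → ¬IsUnit u → ¬IsUnit v →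
      ¬IsUnit w → u * v * w ∈ I.toIdeal → u * v * w ∉ J.toIdeal →
      u * v ∈ I.toIdeal ∨ w ∈ I.toIdeal := by
    intro u v w h1 h2 h3 h4 h5 h6 h7 h8
    exact hI.2 u v w h1 h2 h3 h4 h5 h6 h7 (by rw [hφset]; exact h8)
  have unitCancel : ∀ {v t : R}, IsUnit v → t * v ∈ I.toIdeal → t ∈ I.toIdeal := by
    rintro v t ⟨u, rfl⟩ h
    simpa [mul_assoc] using I.toIdeal.mul_mem_right ((u⁻¹ : Rˣ) : R) h
  -- Step 1 : a * b * x ∈ J for x ∈ I_g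
  have h1 : ∀ x : R, x ∈ I.toIdeal → x ∈ 𝒜 g → a * b * x ∈ J.toIdeal := by
    intro x hxI hxg
    have hsum : a * b * (c + x) ∈ I.toIdeal := by
      have he : a * b * (c + x) = a * b * c + a * b * x := by ring
      rw [he]; exact add_mem (hJle habcJ') (Ideal.mul_mem_left _ _ hxI)
    by_cases hp : a * b * (c + x) ∈ J.toIdeal
    · have he : a * b * x = a * b * (c + x) - a * b * c := by ring
      rw [he]; exact sub_mem hp habcJ'
    · exfalso
      have hnu : ¬IsUnit (c + x) := fun hu => habI (unitCancel hu hsum)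
      rcases key a b (c + x) hag hbg (add_mem hcg hxg) hua hub hnu hsum hp with h | h
      · exact habI h
      · exact hcI (by simpa using sub_mem h hxI)
  -- Step 2a : a * x * c ∈ J
  have h2a : ∀ x : R, x ∈ I.toIdeal → x ∈ 𝒜 g → a * x * c ∈ J.toIdeal := by
    intro x hxI hxg
    have hsum : a * (b + x) * c ∈ I.toIdeal := by
      have he : a * (b + x) * c = a * b * c + a * x * c := by ring
      rw [he]
      exact add_mem (hJle habcJ') (Ideal.mul_mem_right c _ (Ideal.mul_mem_left _ a hxI))
    by_cases hp : a * (b + x) * c ∈ J.toIdeal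
    · have he : a * x * c = a * (b + x) * c - a * b * c := by ring
      rw [he]; exact sub_mem hp habcJ'
    · exfalso
      have hnu : ¬IsUnit (b + x) := by
        intro hu
        apply hac
        exact unitCancel hu (by rw [show a * c * (b + x) = a * (b + x) * c by ring]; exact hsum)
      rcases key a (b + x) c hag (add_mem hbg hxg) hcg hua hnu huc hsum hp with h | h
      · apply habI
        have he : a * b = a * (b + x) - a * x := by ring
        rw [he]; exact sub_mem h (Ideal.mul_mem_left _ a hxI)
      · exact hcI h
  -- Step 2b : x * b * c ∈ J
  have h2b : ∀ x : R, x ∈ I.toIdeal → x ∈ 𝒜 g → x * b * c ∈ J.toIdeal := by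
    intro x hxI hxg
    have hsum : (a + x) * b * c ∈ I.toIdeal := by
      have he : (a + x) * b * c = a * b * c + x * b * c := by ring
      rw [he]
      exact add_mem (hJle habcJ') (Ideal.mul_mem_right c _ (Ideal.mul_mem_right b _ hxI))
    by_cases hp : (a + x) * b * c ∈ J.toIdeal
    · have he : x * b * c = (a + x) * b * c - a * b * c := by ring
      rw [he]; exact sub_mem hp habcJ'
    · exfalso
      have hnu : ¬IsUnit (a + x) := by
        intro hu
        apply hbc
        exact unitCancel hu (by rw [show b * c * (a + x) = (a + x) * b * c by ring]; exact hsum)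
      rcases key (a + x) b c (add_mem hag hxg) hbg hcg hnu hub huc hsum hp with h | h
      · apply habI
        have he : a * b = (a + x) * b - x * b := by ring
        rw [he]; exact sub_mem h (Ideal.mul_mem_right b _ hxI)
      · exact hcI h
  -- Step 3a : a * x * y ∈ J
  have h3a : ∀ x y : R, x ∈ I.toIdeal → x ∈ 𝒜 g → y ∈ I.toIdeal → y ∈ 𝒜 g →
      a * x * y ∈ J.toIdeal := by
    intro x y hxI hxg hyI hyg
    have hJsum : a * b * c + a * b * y + a * x * c ∈ J.toIdeal :=
      add_mem (add_mem habcJ' (h1 y hyI hyg)) (h2a x hxI hxg)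
    have hsum : a * (b + x) * (c + y) ∈ I.toIdeal := by
      have he : a * (b + x) * (c + y) = (a * b * c + a * b * y + a * x * c) + a * x * y := by
        ring
      rw [he]
      exact add_mem (hJle hJsum) (Ideal.mul_mem_right y _ (Ideal.mul_mem_left _ a hxI))
    by_cases hp : a * (b + x) * (c + y) ∈ J.toIdeal
    · have he : a * x * y = a * (b + x) * (c + y) - (a * b * c + a * b * y + a * x * c) := by
        ring
      rw [he]; exact sub_mem hp hJsum
    · exfalso
      have hnux : ¬IsUnit (b + x) := by
        intro hu
        apply hac
        have hq : a * (c + y) * (b + x) ∈ I.toIdeal := by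
          have he2 : a * (c + y) * (b + x) = a * (b + x) * (c + y) := by ring
          rw [he2]; exact hsum
        have h2 : a * (c + y) ∈ I.toIdeal := unitCancel hu hq
        have he : a * c = a * (c + y) - a * y := by ring
        rw [he]; exact sub_mem h2 (Ideal.mul_mem_left _ a hyI)
      have hnuy : ¬IsUnit (c + y) := by
        intro hu
        apply habI
        have h2 : a * (b + x) ∈ I.toIdeal := unitCancel hu hsum
        have he : a * b = a * (b + x) - a * x := by ring
        rw [he]; exact sub_mem h2 (Ideal.mul_mem_left _ a hxI)
      rcases key a (b + x) (c + y) hag (add_mem hbg hxg) (add_mem hcg hyg) hua hnux hnuy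
          hsum hp with h | h
      · apply habI
        have he : a * b = a * (b + x) - a * x := by ring
        rw [he]; exact sub_mem h (Ideal.mul_mem_left _ a hxI)
      · exact hcI (by simpa using sub_mem h hyI)
  -- Step 3b : x * b * y ∈ J
  have h3b : ∀ x y : R, x ∈ I.toIdeal → x ∈ 𝒜 g → y ∈ I.toIdeal → y ∈ 𝒜 g →
      x * b * y ∈ J.toIdeal := by
    intro x y hxI hxg hyI hyg
    have hJsum : a * b * c + a * b * y + x * b * c ∈ J.toIdeal :=
      add_mem (add_mem habcJ' (h1 y hyI hyg)) (h2b x hxI hxg)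
    have hsum : (a + x) * b * (c + y) ∈ I.toIdeal := by
      have he : (a + x) * b * (c + y) = (a * b * c + a * b * y + x * b * c) + x * b * y := by
        ring
      rw [he]
      exact add_mem (hJle hJsum) (Ideal.mul_mem_right y _ (Ideal.mul_mem_right b _ hxI))
    by_cases hp : (a + x) * b * (c + y) ∈ J.toIdeal
    · have he : x * b * y = (a + x) * b * (c + y) - (a * b * c + a * b * y + x * b * c) := by
        ring
      rw [he]; exact sub_mem hp hJsum
    · exfalso
      have hnux : ¬IsUnit (a + x) := by
        intro hu
        apply hbc
        have hq : b * (c + y) * (a + x) ∈ I.toIdeal := by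
          have he2 : b * (c + y) * (a + x) = (a + x) * b * (c + y) := by ring
          rw [he2]; exact hsum
        have h2 : b * (c + y) ∈ I.toIdeal := unitCancel hu hq
        have he : b * c = b * (c + y) - b * y := by ring
        rw [he]; exact sub_mem h2 (Ideal.mul_mem_left _ b hyI)
      have hnuy : ¬IsUnit (c + y) := by
        intro hu
        apply habI
        have h2 : (a + x) * b ∈ I.toIdeal := unitCancel hu hsum
        have he : a * b = (a + x) * b - x * b := by ring
        rw [he]; exact sub_mem h2 (Ideal.mul_mem_right b _ hxI)
      rcases key (a + x) b (c + y) (add_mem hag hxg) hbg (add_mem hcg hyg) hnux hub hnuy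
          hsum hp with h | h
      · apply habI
        have he : a * b = (a + x) * b - x * b := by ring
        rw [he]; exact sub_mem h (Ideal.mul_mem_right b _ hxI)
      · exact hcI (by simpa using sub_mem h hyI)
  -- Step 3c : x * y * c ∈ J
  have h3c : ∀ x y : R, x ∈ I.toIdeal → x ∈ 𝒜 g → y ∈ I.toIdeal → y ∈ 𝒜 g →
      x * y * c ∈ J.toIdeal := by
    intro x y hxI hxg hyI hyg
    have hJsum : a * b * c + a * y * c + x * b * c ∈ J.toIdeal :=
      add_mem (add_mem habcJ' (h2a y hyI hyg)) (h2b x hxI hxg)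
    have hsum : (a + x) * (b + y) * c ∈ I.toIdeal := by
      have he : (a + x) * (b + y) * c = (a * b * c + a * y * c + x * b * c) + x * y * c := by
        ring
      rw [he]
      exact add_mem (hJle hJsum) (Ideal.mul_mem_right c _ (Ideal.mul_mem_right y _ hxI))
    by_cases hp : (a + x) * (b + y) * c ∈ J.toIdeal
    · have he : x * y * c = (a + x) * (b + y) * c - (a * b * c + a * y * c + x * b * c) := by
        ring
      rw [he]; exact sub_mem hp hJsum
    · exfalso
      have hnux : ¬IsUnit (a + x) := by
        intro hu
        apply hbc
        have hq : (b + y) * c * (a + x) ∈ I.toIdeal := by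
          have he2 : (b + y) * c * (a + x) = (a + x) * (b + y) * c := by ring
          rw [he2]; exact hsum
        have h2 : (b + y) * c ∈ I.toIdeal := unitCancel hu hq
        have he : b * c = (b + y) * c - y * c := by ring
        rw [he]; exact sub_mem h2 (Ideal.mul_mem_right c _ hyI)
      have hnuy : ¬IsUnit (b + y) := by
        intro hu
        apply hac
        have hq : (a + x) * c * (b + y) ∈ I.toIdeal := by
          have he2 : (a + x) * c * (b + y) = (a + x) * (b + y) * c := by ring
          rw [he2]; exact hsum
        have h2 : (a + x) * c ∈ I.toIdeal := unitCancel hu hq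
        have he : a * c = (a + x) * c - x * c := by ring
        rw [he]; exact sub_mem h2 (Ideal.mul_mem_right c _ hxI)
      rcases key (a + x) (b + y) c (add_mem hag hxg) (add_mem hbg hyg) hcg hnux hnuy huc
          hsum hp with h | h
      · apply habI
        have he : a * b = (a + x) * (b + y) - (a * y + x * b + x * y) := by ring
        rw [he]
        exact sub_mem h (add_mem (add_mem (Ideal.mul_mem_left _ a hyI)
          (Ideal.mul_mem_right b _ hxI)) (Ideal.mul_mem_right y _ hxI))
      · exact hcI h
  -- Final step : x * y * z ∈ J
  have hfin : ∀ x y z : R, x ∈ I.toIdeal → x ∈ 𝒜 g → y ∈ I.toIdeal → y ∈ 𝒜 g →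
      z ∈ I.toIdeal → z ∈ 𝒜 g → x * y * z ∈ J.toIdeal := by
    intro x y z hxI hxg hyI hyg hzI hzg
    have hJsum : a * b * c + a * b * z + a * y * c + a * y * z + x * b * c + x * b * z
        + x * y * c ∈ J.toIdeal := by
      refine add_mem (add_mem (add_mem (add_mem (add_mem (add_mem habcJ' ?_) ?_) ?_) ?_) ?_) ?_
      · exact h1 z hzI hzg
      · exact h2a y hyI hyg
      · exact h3a y z hyI hyg hzI hzg
      · exact h2b x hxI hxg
      · exact h3b x z hxI hxg hzI hzg
      · exact h3c x y hxI hxg hyI hyg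
    have hsum : (a + x) * (b + y) * (c + z) ∈ I.toIdeal := by
      have he : (a + x) * (b + y) * (c + z) = (a * b * c + a * b * z + a * y * c + a * y * z
          + x * b * c + x * b * z + x * y * c) + x * y * z := by ring
      rw [he]
      exact add_mem (hJle hJsum) (Ideal.mul_mem_right z _ (Ideal.mul_mem_right y _ hxI))
    by_cases hp : (a + x) * (b + y) * (c + z) ∈ J.toIdeal
    · have he : x * y * z = (a + x) * (b + y) * (c + z) - (a * b * c + a * b * z + a * y * c
          + a * y * z + x * b * c + x * b * z + x * y * c) := by ring
      rw [he]; exact sub_mem hp hJsum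
    · exfalso
      have hnux : ¬IsUnit (a + x) := by
        intro hu
        apply hbc
        have hq : (b + y) * (c + z) * (a + x) ∈ I.toIdeal := by
          have he2 : (b + y) * (c + z) * (a + x) = (a + x) * (b + y) * (c + z) := by ring
          rw [he2]; exact hsum
        have h2 : (b + y) * (c + z) ∈ I.toIdeal := unitCancel hu hq
        have he : b * c = (b + y) * (c + z) - (b * z + y * c + y * z) := by ring
        rw [he]
        exact sub_mem h2 (add_mem (add_mem (Ideal.mul_mem_left _ b hzI)
          (Ideal.mul_mem_right c _ hyI)) (Ideal.mul_mem_right z _ hyI))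
      have hnuy : ¬IsUnit (b + y) := by
        intro hu
        apply hac
        have hq : (a + x) * (c + z) * (b + y) ∈ I.toIdeal := by
          have he2 : (a + x) * (c + z) * (b + y) = (a + x) * (b + y) * (c + z) := by ring
          rw [he2]; exact hsum
        have h2 : (a + x) * (c + z) ∈ I.toIdeal := unitCancel hu hq
        have he : a * c = (a + x) * (c + z) - (a * z + x * c + x * z) := by ring
        rw [he]
        exact sub_mem h2 (add_mem (add_mem (Ideal.mul_mem_left _ a hzI)
          (Ideal.mul_mem_right c _ hxI)) (Ideal.mul_mem_right z _ hxI))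
      have hnuz : ¬IsUnit (c + z) := by
        intro hu
        apply habI
        have h2 : (a + x) * (b + y) ∈ I.toIdeal := unitCancel hu hsum
        have he : a * b = (a + x) * (b + y) - (a * y + x * b + x * y) := by ring
        rw [he]
        exact sub_mem h2 (add_mem (add_mem (Ideal.mul_mem_left _ a hyI)
          (Ideal.mul_mem_right b _ hxI)) (Ideal.mul_mem_right y _ hxI))
      rcases key (a + x) (b + y) (c + z) (add_mem hag hxg) (add_mem hbg hyg)
          (add_mem hcg hzg) hnux hnuy hnuz hsum hp with h | h
      · apply habI
        have he : a * b = (a + x) * (b + y) - (a * y + x * b + x * y) := by ring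
        rw [he]
        exact sub_mem h (add_mem (add_mem (Ideal.mul_mem_left _ a hyI)
          (Ideal.mul_mem_right b _ hxI)) (Ideal.mul_mem_right y _ hxI))
      · exact hcI (by simpa using sub_mem h hzI)
  -- Conclude
  rw [hφset]
  intro w hw
  refine AddSubmonoid.closure_le (S := J.toIdeal.toAddSubmonoid) |>.mpr ?_ hw
  rintro w ⟨x, hx, y, hy, z, hz, rfl⟩
  exact hfin x y z hx.1 hx.2 hy.1 hy.2 hz.1 hz.2
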